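/- ERM is elicitable via the exponential loss: for any bounded real random variable X and β > 0, the unique minimizer over y ∈ ℝ of E[ℓ_β(X - y)] is y = ERM_β[X], where ℓ_β(z) := β⁻¹(exp(-β·z) - 1) + z. -/

import Mathlib

/-!
Writing `S := E[exp(-βX)]` and `y₀ := ERM_β[X] = -β⁻¹ log S`, so that `S · exp(βy₀) = 1`,
a direct computation gives the exact decomposition
`E[ℓ_β(X - y)] = E[ℓ_β(X - y₀)] + ℓ_β(y₀ - y)`.
Since `ℓ_β(z) = β⁻¹ (exp(-βz) - 1 + βz)` is nonnegative and vanishes only at `z = 0`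
(because `exp u ≥ 1 + u` with equality only at `u = 0`), `y₀` is the unique minimizer.
-/

open Real Finset

noncomputable def expLoss (β z : ℝ) : ℝ := β⁻¹ * (exp (-β * z) - 1) + z

noncomputable def entropicRisk {Ω : Type*} [Fintype Ω] (β : ℝ) (p X : Ω → ℝ) : ℝ :=
  -β⁻¹ * log (∑ ω, p ω * exp (-β * X ω))

lemma expLoss_eq_inv_mul (β z : ℝ) (hβ : β ≠ 0) :
    expLoss β z = β⁻¹ * (exp (-β * z) - 1 + β * z) := by
  unfold expLoss
  field_simp

lemma expLoss_nonneg {β : ℝ} (hβ : 0 < β) (z : ℝ) : 0 ≤ expLoss β z := by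
  rw [expLoss_eq_inv_mul β z hβ.ne']
  have := add_one_le_exp (-β * z)
  have := inv_pos.mpr hβ
  nlinarith

lemma expLoss_pos {β z : ℝ} (hβ : 0 < β) (hz : z ≠ 0) : 0 < expLoss β z := by
  rw [expLoss_eq_inv_mul β z hβ.ne']
  have := add_one_lt_exp (mul_ne_zero (neg_ne_zero.mpr hβ.ne') hz)
  have := inv_pos.mpr hβ
  nlinarith

section Finite

variable {Ω : Type*} [Fintype Ω] {p : Ω → ℝ}

lemma sum_mul_pos_of_pos {g : Ω → ℝ} (hp : ∀ ω, 0 ≤ p ω) (hsum : ∑ ω, p ω = 1)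
    (hg : ∀ ω, 0 < g ω) : 0 < ∑ ω, p ω * g ω := by
  obtain ⟨ω, -, hω⟩ := exists_ne_zero_of_sum_ne_zero (hsum.trans_ne one_ne_zero)
  exact sum_pos' (fun ω _ => mul_nonneg (hp ω) (hg ω).le)
    ⟨ω, mem_univ ω, mul_pos ((hp ω).lt_of_ne' hω) (hg ω)⟩

lemma sum_mul_expLoss_sub (hsum : ∑ ω, p ω = 1) (X : Ω → ℝ) (β y : ℝ) :
    ∑ ω, p ω * expLoss β (X ω - y) =
      β⁻¹ * (exp (β * y) * ∑ ω, p ω * exp (-β * X ω) - 1) + ∑ ω, p ω * X ω - y := by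
  have hterm : ∀ ω, p ω * expLoss β (X ω - y) =
      β⁻¹ * exp (β * y) * (p ω * exp (-β * X ω)) - β⁻¹ * p ω + p ω * X ω - y * p ω := fun ω => by
    rw [expLoss, show -β * (X ω - y) = β * y + -β * X ω by ring, exp_add]
    ring
  simp only [hterm, sum_add_distrib, sum_sub_distrib, ← mul_sum, hsum]
  ring

lemma exp_mul_entropicRisk_mul_sum {β : ℝ} (hβ : β ≠ 0) {X : Ω → ℝ}
    (hS : 0 < ∑ ω, p ω * exp (-β * X ω)) :
    exp (β * entropicRisk β p X) * ∑ ω, p ω * exp (-β * X ω) = 1 := by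
  have hβy₀ : β * entropicRisk β p X = -log (∑ ω, p ω * exp (-β * X ω)) := by
    rw [entropicRisk]
    field_simp
  rw [hβy₀, exp_neg, exp_log hS, inv_mul_cancel₀ hS.ne']

lemma sum_mul_expLoss_sub_eq_add_expLoss (hp : ∀ ω, 0 ≤ p ω) (hsum : ∑ ω, p ω = 1)
    (X : Ω → ℝ) {β : ℝ} (hβ : β ≠ 0) (y : ℝ) :
    ∑ ω, p ω * expLoss β (X ω - y) =
      ∑ ω, p ω * expLoss β (X ω - entropicRisk β p X) + expLoss β (entropicRisk β p X - y) := by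
  set y₀ := entropicRisk β p X
  have hS := sum_mul_pos_of_pos (g := fun ω => exp (-β * X ω)) hp hsum fun _ => exp_pos _
  have hy₀ := exp_mul_entropicRisk_mul_sum hβ hS
  have hy : exp (β * y) * ∑ ω, p ω * exp (-β * X ω) = exp (-β * (y₀ - y)) := by
    rw [show -β * (y₀ - y) = β * y + -(β * y₀) by ring, exp_add, exp_neg,
      eq_inv_of_mul_eq_one_right hy₀]
  rw [sum_mul_expLoss_sub hsum, sum_mul_expLoss_sub hsum, hy, hy₀, expLoss]
  ring

lemma sum_mul_expLoss_sub_entropicRisk_le (hp : ∀ ω, 0 ≤ p ω) (hsum : ∑ ω, p ω = 1)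
    (X : Ω → ℝ) {β : ℝ} (hβ : 0 < β) (y : ℝ) :
    ∑ ω, p ω * expLoss β (X ω - entropicRisk β p X) ≤ ∑ ω, p ω * expLoss β (X ω - y) := by
  rw [sum_mul_expLoss_sub_eq_add_expLoss hp hsum X hβ.ne' y]
  exact le_add_of_nonneg_right (expLoss_nonneg hβ _)

lemma eq_entropicRisk_of_forall_sum_mul_expLoss_le (hp : ∀ ω, 0 ≤ p ω)
    (hsum : ∑ ω, p ω = 1) (X : Ω → ℝ) {β : ℝ} (hβ : 0 < β) {y : ℝ}
    (hy : ∀ y', ∑ ω, p ω * expLoss β (X ω - y) ≤ ∑ ω, p ω * expLoss β (X ω - y')) :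
    y = entropicRisk β p X := by
  by_contra hne
  have hpos : 0 < expLoss β (entropicRisk β p X - y) :=
    expLoss_pos hβ (sub_ne_zero.mpr (Ne.symm hne))
  have := hy (entropicRisk β p X)
  rw [sum_mul_expLoss_sub_eq_add_expLoss hp hsum X hβ.ne' y] at this
  linarith

end Finite

theorem erm_elicitable_general {Ω : Type*} [Fintype Ω]
    (p : Ω → ℝ) (hp : ∀ ω, 0 ≤ p ω) (hsum : ∑ ω, p ω = 1)
    (X : Ω → ℝ) (β : ℝ) (hβ : 0 < β) :
    (∀ y : ℝ,
        (∑ ω, p ω * (β⁻¹ * (Real.exp (-β * (X ω - (-β⁻¹ * Real.log (∑ ω', p ω' * Real.exp (-β * X ω'))))) - 1)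
            + (X ω - (-β⁻¹ * Real.log (∑ ω', p ω' * Real.exp (-β * X ω')))))) ≤
          ∑ ω, p ω * (β⁻¹ * (Real.exp (-β * (X ω - y)) - 1) + (X ω - y))) ∧
      (∀ y : ℝ,
        (∀ y' : ℝ,
            (∑ ω, p ω * (β⁻¹ * (Real.exp (-β * (X ω - y)) - 1) + (X ω - y))) ≤
              ∑ ω, p ω * (β⁻¹ * (Real.exp (-β * (X ω - y')) - 1) + (X ω - y'))) →
          y = -β⁻¹ * Real.log (∑ ω', p ω' * Real.exp (-β * X ω'))) :=
  ⟨sum_mul_expLoss_sub_entropicRisk_le hp hsum X hβ,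
    fun _ hy => eq_entropicRisk_of_forall_sum_mul_expLoss_le hp hsum X hβ hy⟩

/-- ERM is elicitable via the exponential loss
`ℓ_β(z) = β⁻¹ (exp (-β z) - 1) + z`: the unique minimizer over `y ∈ ℝ` of
`E[ℓ_β(X - y)]` is `y = ERM_β[X]`. -/
theorem erm_elicitable {Ω : Type*} [Fintype Ω] [Nonempty Ω]
    (p : Ω → ℝ) (hp : ∀ ω, 0 ≤ p ω) (hsum : ∑ ω, p ω = 1)
    (X : Ω → ℝ) (β : ℝ) (hβ : 0 < β) :
    (∀ y : ℝ,
        (∑ ω, p ω * (β⁻¹ * (Real.exp (-β * (X ω - (-β⁻¹ * Real.log (∑ ω', p ω' * Real.exp (-β * X ω'))))) - 1)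
            + (X ω - (-β⁻¹ * Real.log (∑ ω', p ω' * Real.exp (-β * X ω')))))) ≤
          ∑ ω, p ω * (β⁻¹ * (Real.exp (-β * (X ω - y)) - 1) + (X ω - y))) ∧
      (∀ y : ℝ,
        (∀ y' : ℝ,
            (∑ ω, p ω * (β⁻¹ * (Real.exp (-β * (X ω - y)) - 1) + (X ω - y))) ≤
              ∑ ω, p ω * (β⁻¹ * (Real.exp (-β * (X ω - y')) - 1) + (X ω - y'))) →
          y = -β⁻¹ * Real.log (∑ ω', p ω' * Real.exp (-β * X ω'))) :=
  erm_elicitable_general p hp hsum X β hβ
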